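/- Let Ω ⊂ ℝ^d be open, bounded and convex, f, g ∈ L^∞(Ω) probability densities with g = 0 on a neighbourhood of ∂Ω. Then there exists C > 0 such that the interpolation density σ satisfies σ(x) ≤ C · dist(x, ∂Ω) for all x ∈ Ω. -/

import Mathlib

/-!
For fixed `t` the inner integral is at most `Cf (1 - t)⁻ᵈ` (bound `f`, integrate `g`) and at most
`Cg t⁻ᵈ` (bound `g`, integrate the rescaled copy of `f`), hence at most `2ᵈ (Cf + Cg)`.
If `g y ≠ 0` then `ball y δ₀ ⊆ Ω`, so by convexity every point `(1 - t) z + t y` with `z ∈ Ω` is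
the centre of a ball of radius `t δ₀` inside `Ω`. The integrand therefore vanishes once
`t > dist(x, ∂Ω) / δ₀`, and integrating in `t` gives `σ x ≤ 2ᵈ (Cf + Cg) dist(x, ∂Ω) / δ₀`.
-/

open MeasureTheory Set Metric Module

section Geometry

variable {E : Type*} [NormedAddCommGroup E] [NormedSpace ℝ E]

theorem Convex.ball_combo_subset {Ω : Set E} (hΩ : Convex ℝ Ω) {z y : E} {δ t : ℝ}
    (hz : z ∈ Ω) (hy : ball y δ ⊆ Ω) (ht₀ : 0 < t) (ht₁ : t ≤ 1) :
    ball ((1 - t) • z + t • y) (t * δ) ⊆ Ω := by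
  intro w hw
  have hw' : y + t⁻¹ • (w - ((1 - t) • z + t • y)) ∈ ball y δ := by
    rw [mem_ball, dist_eq_norm, add_sub_cancel_left, norm_smul,
      Real.norm_of_nonneg (inv_nonneg.2 ht₀.le), inv_mul_lt_iff₀ ht₀, ← dist_eq_norm]
    exact hw
  convert hΩ hz (hy hw') (sub_nonneg.2 ht₁) ht₀.le (by ring) using 1
  rw [smul_add, smul_smul, mul_inv_cancel₀ ht₀.ne', one_smul]
  abel

theorem IsOpen.le_infDist_frontier {X : Type*} [PseudoMetricSpace X] {Ω : Set X} (hΩ : IsOpen Ω)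
    (hne : (frontier Ω).Nonempty) {x : X} {r : ℝ} (h : ball x r ⊆ Ω) :
    r ≤ infDist x (frontier Ω) :=
  (le_infDist hne).2 fun _ hp => not_lt.1 fun hlt =>
    hΩ.inter_frontier_eq.subset ⟨h (mem_ball'.2 hlt), hp⟩

theorem ball_infDist_frontier_subset [FiniteDimensional ℝ E] {Ω : Set E} {x : E} (hx : x ∈ Ω)
    (hne : (frontier Ω).Nonempty) : ball x (infDist x (frontier Ω)) ⊆ Ω := by
  have hΩ : Ω ≠ univ := by rintro rfl; simp at hne
  obtain ⟨p, hp, hpd⟩ := exists_mem_frontier_infDist_compl_eq_dist hx hΩ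
  exact (ball_subset_ball (hpd ▸ infDist_le_dist_of_mem hp)).trans ball_infDist_compl_subset

end Geometry

theorem le_two_pow_mul_add {a b φ t : ℝ} (n : ℕ) (ha : 0 ≤ a) (hb : 0 ≤ b)
    (h₁ : φ ≤ a * ((1 - t) ^ n)⁻¹) (h₂ : φ ≤ b * (t ^ n)⁻¹) : φ ≤ 2 ^ n * (a + b) := by
  have inv_pow_le : ∀ u : ℝ, 1 / 2 ≤ u → (u ^ n)⁻¹ ≤ 2 ^ n := fun u hu =>
    inv_le_of_inv_le₀ (by positivity) (by rw [← inv_pow]; gcongr; linarith)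
  rcases le_total t (1 / 2) with h | h
  · nlinarith [inv_pow_le (1 - t) (by linarith), pow_pos (two_pos (α := ℝ)) n]
  · nlinarith [inv_pow_le t h, pow_pos (two_pos (α := ℝ)) n]

theorem setIntegral_Ioo_le_mul {φ : ℝ → ℝ} {M r : ℝ} (hr : 0 ≤ r)
    (h0 : ∀ t ∈ Ioo 0 1, 0 ≤ φ t) (hM : ∀ t ∈ Ioo 0 1, φ t ≤ M)
    (hφ : ∀ t ∈ Ioo 0 1, r < t → φ t = 0) : ∫ t in Ioo 0 1, φ t ≤ M * r := by
  have hhalf : (1 / 2 : ℝ) ∈ Ioo 0 1 := by norm_num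
  have hM0 : 0 ≤ M := (h0 _ hhalf).trans (hM _ hhalf)
  calc ∫ t in Ioo 0 1, φ t ≤ ∫ t in Ioo 0 1, (Iic r).indicator (fun _ => M) t := by
        refine integral_mono_of_nonneg (ae_restrict_of_forall_mem measurableSet_Ioo h0)
          ((integrable_const M).indicator measurableSet_Iic) ?_
        refine ae_restrict_of_forall_mem measurableSet_Ioo fun t ht => ?_
        rcases le_or_gt t r with htr | htr
        · simpa [htr] using hM t ht
        · simp [hφ t ht htr, htr.not_ge]
    _ = volume.real (Iic r ∩ Ioo 0 1) * M := by
        rw [integral_indicator measurableSet_Iic, setIntegral_const, smul_eq_mul,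
          measureReal_restrict_apply measurableSet_Iic]
    _ ≤ volume.real (Ioc 0 r) * M := by
        gcongr
        · exact measure_Ioc_lt_top.ne
        · exact fun t ht => ⟨ht.2.1, ht.1⟩
    _ = M * r := by rw [Real.volume_real_Ioc, sub_zero, max_eq_left hr, mul_comm]

section InterpolationSlice

variable {E : Type*} [NormedAddCommGroup E] [NormedSpace ℝ E] [MeasurableSpace E]
  (μ : Measure E) (Ω : Set E) (f g : E → ℝ)

/-- The density at `x` of `(1 - t) X + t Y`; the paper's `σ x` is its integral over `t ∈ (0, 1)`. -/
noncomputable def interpolationSlice (x : E) (t : ℝ) : ℝ :=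
  ∫ y in Ω, f ((1 - t)⁻¹ • (x - t • y)) * g y * ((1 - t) ^ finrank ℝ E)⁻¹ ∂μ

variable {μ Ω f g}

theorem interpolationSlice_nonneg (hf0 : ∀ x, 0 ≤ f x) (hg0 : ∀ x, 0 ≤ g x) (x : E) {t : ℝ}
    (ht : t ≤ 1) : 0 ≤ interpolationSlice μ Ω f g x t :=
  integral_nonneg fun _ =>
    mul_nonneg (mul_nonneg (hf0 _) (hg0 _)) (inv_nonneg.2 (pow_nonneg (sub_nonneg.2 ht) _))

theorem interpolationSlice_le_left {Cf : ℝ} (hf0 : ∀ x, 0 ≤ f x) (hg0 : ∀ x, 0 ≤ g x)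
    (hfb : ∀ x, f x ≤ Cf) (hg : IntegrableOn g Ω μ) (hg1 : ∫ y in Ω, g y ∂μ = 1) (x : E)
    {t : ℝ} (ht : t ≤ 1) :
    interpolationSlice μ Ω f g x t ≤ Cf * ((1 - t) ^ finrank ℝ E)⁻¹ := by
  have hc : 0 ≤ ((1 - t) ^ finrank ℝ E)⁻¹ := inv_nonneg.2 (pow_nonneg (sub_nonneg.2 ht) _)
  calc interpolationSlice μ Ω f g x t
      ≤ ∫ y in Ω, Cf * g y * ((1 - t) ^ finrank ℝ E)⁻¹ ∂μ :=
        integral_mono_of_nonneg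
          (ae_of_all _ fun _ => mul_nonneg (mul_nonneg (hf0 _) (hg0 _)) hc)
          ((hg.const_mul Cf).mul_const _)
          (ae_of_all _ fun y =>
            mul_le_mul_of_nonneg_right (mul_le_mul_of_nonneg_right (hfb _) (hg0 y)) hc)
    _ = Cf * ((1 - t) ^ finrank ℝ E)⁻¹ := by
        rw [integral_mul_const, integral_const_mul, hg1, mul_one]

theorem interpolationSlice_le_right [FiniteDimensional ℝ E] [BorelSpace E] [μ.IsAddHaarMeasure]
    {Cg : ℝ} (hf0 : ∀ x, 0 ≤ f x) (hg0 : ∀ x, 0 ≤ g x) (hgb : ∀ x, g x ≤ Cg)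
    (hf1 : ∫ x, f x ∂μ = 1) (x : E) {t : ℝ} (ht : t ∈ Ioo 0 1) :
    interpolationSlice μ Ω f g x t ≤ Cg * (t ^ finrank ℝ E)⁻¹ := by
  set n := finrank ℝ E
  obtain ⟨ht₀, ht₁⟩ := ht
  have h1t : 0 < 1 - t := sub_pos.2 ht₁
  set b := (1 - t)⁻¹ • x
  set s := (1 - t)⁻¹ * t
  have hs : 0 < s := by positivity
  have hrw : ∀ y : E, (1 - t)⁻¹ • (x - t • y) = b - s • y := fun y => by
    rw [smul_sub, smul_smul]
  have hmass : ∫ y, f (b - s • y) ∂μ = (s ^ n)⁻¹ := by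
    rw [Measure.integral_comp_smul μ (fun w => f (b - w)) s, integral_sub_left_eq_self, hf1,
      smul_eq_mul, mul_one, abs_of_pos (by positivity)]
  have hint : Integrable (fun y => f (b - s • y) * Cg * ((1 - t) ^ n)⁻¹) μ :=
    ((Integrable.of_integral_ne_zero (by rw [hmass]; positivity)).mul_const _).mul_const _
  have hCg : 0 ≤ Cg := (hg0 x).trans (hgb x)
  have hc : 0 ≤ ((1 - t) ^ n)⁻¹ := by positivity
  calc interpolationSlice μ Ω f g x t
      ≤ ∫ y in Ω, f (b - s • y) * Cg * ((1 - t) ^ n)⁻¹ ∂μ :=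
        integral_mono_of_nonneg
          (ae_of_all _ fun _ => mul_nonneg (mul_nonneg (hf0 _) (hg0 _)) hc)
          hint.integrableOn
          (ae_of_all _ fun y => by
            simp only [hrw]
            exact mul_le_mul_of_nonneg_right (mul_le_mul_of_nonneg_left (hgb y) (hf0 _)) hc)
    _ ≤ ∫ y, f (b - s • y) * Cg * ((1 - t) ^ n)⁻¹ ∂μ :=
        setIntegral_le_integral hint (ae_of_all _ fun _ => mul_nonneg (mul_nonneg (hf0 _) hCg) hc)
    _ = Cg * (t ^ n)⁻¹ := by
        rw [integral_mul_const, integral_mul_const, hmass, mul_pow, inv_pow]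
        field_simp

theorem interpolationSlice_eq_zero_of_infDist_lt (hΩo : IsOpen Ω) (hΩc : Convex ℝ Ω)
    (hne : (frontier Ω).Nonempty) (hfΩ : ∀ x, x ∉ Ω → f x = 0) {δ : ℝ}
    (hg : ∀ y, g y ≠ 0 → ball y δ ⊆ Ω) {x : E} {t : ℝ} (ht : t ∈ Ioo 0 1)
    (hx : infDist x (frontier Ω) < t * δ) : interpolationSlice μ Ω f g x t = 0 := by
  have hpt : ∀ y, f ((1 - t)⁻¹ • (x - t • y)) * g y = 0 := by
    intro y
    by_contra hne0
    obtain ⟨hfz, hgy⟩ := mul_ne_zero_iff.1 hne0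
    have hz : (1 - t)⁻¹ • (x - t • y) ∈ Ω := by_contra fun h => hfz (hfΩ _ h)
    have hx_combo : (1 - t) • ((1 - t)⁻¹ • (x - t • y)) + t • y = x := by
      rw [smul_smul, mul_inv_cancel₀ (sub_ne_zero.2 ht.2.ne'), one_smul, sub_add_cancel]
    have := hΩo.le_infDist_frontier hne
      (hx_combo ▸ hΩc.ball_combo_subset hz (hg y hgy) ht.1 ht.2.le)
    linarith
  simp [interpolationSlice, hpt]

theorem exists_integral_interpolationSlice_le_mul_infDist [FiniteDimensional ℝ E] [BorelSpace E]
    [μ.IsAddHaarMeasure] {Cf Cg δ₀ : ℝ} (hΩo : IsOpen Ω) (hΩc : Convex ℝ Ω)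
    (hf0 : ∀ x, 0 ≤ f x) (hg0 : ∀ x, 0 ≤ g x) (hfb : ∀ x, f x ≤ Cf) (hgb : ∀ x, g x ≤ Cg)
    (hfΩ : ∀ x, x ∉ Ω → f x = 0) (hgΩ : ∀ x, x ∉ Ω → g x = 0)
    (hf1 : ∫ x, f x ∂μ = 1) (hg1 : ∫ x, g x ∂μ = 1) (hδ₀ : 0 < δ₀)
    (hδg : ∀ z, infDist z (frontier Ω) ≤ δ₀ → g z = 0) :
    ∃ C : ℝ, 0 < C ∧ ∀ x ∈ Ω,
      ∫ t in Ioo 0 1, interpolationSlice μ Ω f g x t ≤ C * infDist x (frontier Ω) := by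
  have hne : (frontier Ω).Nonempty := by
    by_contra h
    have : g = 0 := funext fun z => hδg z (by simp [not_nonempty_iff_eq_empty.1 h, hδ₀.le])
    simp [this] at hg1
  have hgΩ1 : ∫ y in Ω, g y ∂μ = 1 := by rwa [setIntegral_eq_integral_of_forall_compl_eq_zero hgΩ]
  have hgi : IntegrableOn g Ω μ := Integrable.of_integral_ne_zero (by rw [hgΩ1]; exact one_ne_zero)
  have hsupp : ∀ y, g y ≠ 0 → ball y δ₀ ⊆ Ω := fun y hy =>
    (ball_subset_ball (not_le.1 fun h => hy (hδg y h)).le).trans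
      (ball_infDist_frontier_subset (by_contra fun h => hy (hgΩ y h)) hne)
  have hCf : 0 ≤ Cf := (hf0 0).trans (hfb 0)
  have hCg : 0 ≤ Cg := (hg0 0).trans (hgb 0)
  set M := 2 ^ finrank ℝ E * (Cf + Cg)
  have hM : 0 ≤ M := mul_nonneg (by positivity) (add_nonneg hCf hCg)
  refine ⟨(M + 1) / δ₀, div_pos (by linarith) hδ₀, fun x hx => ?_⟩
  calc ∫ t in Ioo 0 1, interpolationSlice μ Ω f g x t ≤ M * (infDist x (frontier Ω) / δ₀) :=
        setIntegral_Ioo_le_mul (div_nonneg infDist_nonneg hδ₀.le)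
          (fun t ht => interpolationSlice_nonneg hf0 hg0 x ht.2.le)
          (fun t ht => le_two_pow_mul_add _ hCf hCg
            (interpolationSlice_le_left hf0 hg0 hfb hgi hgΩ1 x ht.2.le)
            (interpolationSlice_le_right hf0 hg0 hgb hf1 x ht))
          (fun t ht htD => interpolationSlice_eq_zero_of_infDist_lt hΩo hΩc hne hfΩ hsupp ht
            ((div_lt_iff₀ hδ₀).1 htD))
    _ = M / δ₀ * infDist x (frontier Ω) := by ring
    _ ≤ (M + 1) / δ₀ * infDist x (frontier Ω) := by gcongr; exacts [infDist_nonneg, by linarith]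

end InterpolationSlice

theorem stmt_5_general (d : ℕ) (Ω : Set (EuclideanSpace ℝ (Fin d)))
    (hΩo : IsOpen Ω) (hΩc : Convex ℝ Ω)
    (f g : EuclideanSpace ℝ (Fin d) → ℝ) (Cf Cg : ℝ)
    (hf0 : ∀ x, 0 ≤ f x) (hg0 : ∀ x, 0 ≤ g x)
    (hfb : ∀ x, f x ≤ Cf) (hgb : ∀ x, g x ≤ Cg)
    (hfΩ : ∀ x, x ∉ Ω → f x = 0) (hgΩ : ∀ x, x ∉ Ω → g x = 0)
    (hf1 : ∫ x, f x = 1) (hg1 : ∫ x, g x = 1)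
    (hδ : ∃ δ₀ : ℝ, 0 < δ₀ ∧ ∀ z, infDist z (frontier Ω) ≤ δ₀ → g z = 0) :
    ∃ C : ℝ, 0 < C ∧
      ∀ x ∈ Ω,
        (∫ t in Ioo (0:ℝ) 1, ∫ y in Ω,
            f ((1 - t)⁻¹ • (x - t • y)) * g y * ((1 - t) ^ d)⁻¹)
          ≤ C * infDist x (frontier Ω) := by
  obtain ⟨δ₀, hδ₀, hδg⟩ := hδ
  simpa only [interpolationSlice, finrank_euclideanSpace_fin] using
    exists_integral_interpolationSlice_le_mul_infDist hΩo hΩc hf0 hg0 hfb hgb hfΩ hgΩ hf1 hg1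
      hδ₀ hδg

/-- if `Ω ⊂ ℝ^d` is open, bounded and convex, `f, g` are bounded probability
densities on `Ω` (extended by zero), and `g` vanishes on a neighbourhood of `∂Ω`, then there
exists `C > 0` such that the interpolation density `σ` satisfies
`σ(x) ≤ C dist(x, ∂Ω)` for all `x ∈ Ω`. -/
theorem stmt_5 (d : ℕ) (Ω : Set (EuclideanSpace ℝ (Fin d)))
    (hΩo : IsOpen Ω) (hΩb : Bornology.IsBounded Ω) (hΩc : Convex ℝ Ω)
    (f g : EuclideanSpace ℝ (Fin d) → ℝ) (Cf Cg : ℝ)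
    (hfm : Measurable f) (hgm : Measurable g)
    (hf0 : ∀ x, 0 ≤ f x) (hg0 : ∀ x, 0 ≤ g x)
    (hfb : ∀ x, f x ≤ Cf) (hgb : ∀ x, g x ≤ Cg)
    (hfΩ : ∀ x, x ∉ Ω → f x = 0) (hgΩ : ∀ x, x ∉ Ω → g x = 0)
    (hf1 : ∫ x, f x = 1) (hg1 : ∫ x, g x = 1)
    (hδ : ∃ δ₀ : ℝ, 0 < δ₀ ∧ ∀ z, infDist z (frontier Ω) ≤ δ₀ → g z = 0) :
    ∃ C : ℝ, 0 < C ∧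
      ∀ x ∈ Ω,
        (∫ t in Ioo (0:ℝ) 1, ∫ y in Ω,
            f ((1 - t)⁻¹ • (x - t • y)) * g y * ((1 - t) ^ d)⁻¹)
          ≤ C * infDist x (frontier Ω) :=
  stmt_5_general d Ω hΩo hΩc f g Cf Cg hf0 hg0 hfb hgb hfΩ hgΩ hf1 hg1 hδ
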